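/- Let (F_n) be the Fibonacci numbers. For every integer n ≥ 0, F_{2n+1} = Σ_{j∈ℤ} [ C(2n+1, n−5j) − C(2n+1, n−5j−1) ], where the sum runs over all integers j (only finitely many terms are nonzero). -/

import Mathlib

/-- Binomial coefficient `C(m, j)` with integer lower index `j`,
equal to `0` when `j < 0` or `j > m`. -/
def ichoose (m : ℕ) (j : ℤ) : ℚ :=
  if j < 0 then 0 else (m.choose j.toNat : ℚ)

/-!
Write `P_m(k)` for the sum of the binomial coefficients `C(m, i)` over `i ≡ k (mod 5)`.
Pascal's rule gives `P_{m+1}(k) = P_m(k) + P_m(k-1)`, and `P_m` is `5`-periodic in `k`.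
The sum in the theorem is `d_n = P_{2n+1}(n) - P_{2n+1}(n-1)`. Expressing `d_{n+2}`, `d_{n+1}`
and `d_n` through the row `2n+1` by Pascal's rule, the coefficients of `(1+x)^4 (1-x)` reach six
consecutive residues, and periodicity folds them onto five, giving `d_{n+2} = 3 d_{n+1} - d_n`.
This is also the recurrence of `F_{2n+1}`, and both sequences start with `1, 2`.
-/

theorem support_ichoose_subset (m : ℕ) : Function.support (ichoose m) ⊆ Set.Icc 0 (m : ℤ) := by
  intro j hj
  rw [Function.mem_support, ichoose] at hj
  split_ifs at hj with hneg
  · exact absurd rfl hj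
  · refine ⟨not_lt.mp hneg, not_lt.mp fun hlt => hj ?_⟩
    rw [Nat.choose_eq_zero_of_lt (by omega), Nat.cast_zero]

theorem ichoose_succ (m : ℕ) (j : ℤ) : ichoose (m + 1) j = ichoose m j + ichoose m (j - 1) := by
  unfold ichoose
  rcases lt_trichotomy j 0 with h | rfl | h
  · rw [if_pos h, if_pos h, if_pos (by omega), add_zero]
  · simp
  · obtain ⟨t, rfl⟩ : ∃ t : ℕ, j = t + 1 := ⟨(j - 1).toNat, by omega⟩
    rw [if_neg (by omega), if_neg (by omega), if_neg (by omega),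
      show ((t : ℤ) + 1).toNat = t + 1 by omega, show ((t : ℤ) + 1 - 1).toNat = t by omega,
      Nat.choose_succ_succ', Nat.cast_add, add_comm]

noncomputable def residueChooseSum (p : ℤ) (m : ℕ) (k : ℤ) : ℚ :=
  ∑ᶠ j : ℤ, ichoose m (k + p * j)

namespace residueChooseSum

variable {p : ℤ}

theorem hasFiniteSupport (hp : p ≠ 0) (m : ℕ) (k : ℤ) :
    Function.HasFiniteSupport fun j : ℤ => ichoose m (k + p * j) := by
  have hinj : Function.Injective fun j : ℤ => k + p * j :=
    (add_right_injective k).comp (mul_right_injective₀ hp)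
  exact ((Set.finite_Icc 0 (m : ℤ)).preimage hinj.injOn).subset
    fun j hj => support_ichoose_subset m hj

theorem add_modulus (m : ℕ) (k : ℤ) : residueChooseSum p m (k + p) = residueChooseSum p m k := by
  rw [residueChooseSum, ← finsum_comp_equiv (Equiv.subRight 1)]
  exact finsum_congr fun j => by rw [Equiv.subRight_apply]; ring_nf

theorem succ (hp : p ≠ 0) (m : ℕ) (k : ℤ) :
    residueChooseSum p (m + 1) k = residueChooseSum p m k + residueChooseSum p m (k - 1) := by
  simp only [residueChooseSum, ichoose_succ, sub_add_eq_add_sub]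
  exact finsum_add_distrib (hasFiniteSupport hp m k)
    (by simpa only [sub_add_eq_add_sub] using hasFiniteSupport hp m (k - 1))

theorem eq_ichoose {m : ℕ} {k : ℤ} (hm : (m : ℤ) < p) (hk : 0 ≤ k) (hkp : k < p) :
    residueChooseSum p m k = ichoose m k := by
  rw [residueChooseSum, finsum_eq_single _ 0 fun j hj => ?_, mul_zero, add_zero]
  refine Function.notMem_support.mp fun hmem => ?_
  obtain ⟨hlo, hhi⟩ := support_ichoose_subset m hmem
  rcases lt_or_gt_of_ne hj with hneg | hpos <;> nlinarith

theorem finsum_ichoose_sub (hp : p ≠ 0) (m : ℕ) (k : ℤ) :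
    ∑ᶠ j : ℤ, (ichoose m (k - p * j) - ichoose m (k - p * j - 1)) =
      residueChooseSum p m k - residueChooseSum p m (k - 1) := by
  rw [← finsum_comp_equiv (Equiv.neg ℤ)]
  simp only [Equiv.neg_apply, mul_neg, sub_neg_eq_add]
  rw [finsum_sub_distrib (hasFiniteSupport hp m k)
    (by simpa only [sub_add_eq_add_sub] using hasFiniteSupport hp m (k - 1))]
  exact congrArg _ (finsum_congr fun j => by ring_nf)

end residueChooseSum

open residueChooseSum

theorem residueChooseSum_five_sub_rec (m : ℕ) (k : ℤ) :
    residueChooseSum 5 (m + 4) (k + 2) - residueChooseSum 5 (m + 4) (k + 1) =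
      3 * (residueChooseSum 5 (m + 2) (k + 1) - residueChooseSum 5 (m + 2) k) -
        (residueChooseSum 5 m k - residueChooseSum 5 m (k - 1)) := by
  have h5 : (5 : ℤ) ≠ 0 := by norm_num
  have hfold : residueChooseSum 5 m (k - 3) = residueChooseSum 5 m (k + 2) := by
    rw [← add_modulus]; ring_nf
  simp only [succ h5, show m + 4 = m + 3 + 1 from rfl, show m + 3 = m + 2 + 1 from rfl,
    show m + 2 = m + 1 + 1 from rfl]
  ring_nf at hfold ⊢
  rw [hfold]
  ring

theorem fib_odd_rec (n : ℕ) :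
    (Nat.fib (2 * (n + 2) + 1) : ℚ) = 3 * Nat.fib (2 * (n + 1) + 1) - Nat.fib (2 * n + 1) := by
  have h := Nat.fib_add_two (n := 2 * n + 3)
  have h' := Nat.fib_add_two (n := 2 * n + 2)
  have h'' := Nat.fib_add_two (n := 2 * n + 1)
  rw [eq_sub_iff_add_eq]
  exact_mod_cast (by ring_nf at h h' h'' ⊢; omega)

/-- `F_{2n+1} = Σ_{j∈ℤ} [ C(2n+1, n−5j) − C(2n+1, n−5j−1) ]`. -/
theorem fib_odd_eq_finsum_choose (n : ℕ) :
    (Nat.fib (2 * n + 1) : ℚ) =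
      ∑ᶠ j : ℤ, (ichoose (2 * n + 1) ((n : ℤ) - 5 * j)
        - ichoose (2 * n + 1) ((n : ℤ) - 5 * j - 1)) := by
  rw [finsum_ichoose_sub (by norm_num)]
  induction n using Nat.twoStepInduction with
  | zero =>
    have hneg : residueChooseSum 5 1 (-1) = 0 := by
      rw [← add_modulus]
      simp [eq_ichoose, ichoose, Nat.choose_eq_zero_of_lt]
    norm_num [eq_ichoose, ichoose, hneg]
  | one => norm_num [eq_ichoose, ichoose]
  | more n ih₀ ih₁ =>
    rw [fib_odd_rec, ih₀, ih₁]
    push_cast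
    convert (residueChooseSum_five_sub_rec (2 * n + 1) n).symm using 3 <;> ring_nf
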